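/- Let n ≥ 3 and m ≥ 2 be integers. Then every strong resolving set of the jellyfish graph JFG(n, m) has cardinality at least nm − 1; in particular, the set N of all pendant vertices except one pendant vertex v_{im} at each cycle vertex i, for 1 ≤ i ≤ n, is not a strong resolving set of JFG(n, m). -/

import Mathlib

open SimpleGraph

/-- Vertex type of the jellyfish graph `JFG(n, m)`: cycle vertices (left) and
pendant vertices (right, a cycle vertex together with a pendant index). -/
abbrev JVert (n m : ℕ) := (ZMod n) ⊕ ((ZMod n) × Fin m)

/-- The jellyfish graph `JFG(n, m)`: the cycle `C_n` together with `m` pendant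
vertices attached to each cycle vertex. -/
def jellyfish (n m : ℕ) : SimpleGraph (JVert n m) where
  Adj u v :=
    match u, v with
    | Sum.inl i, Sum.inl j => i ≠ j ∧ (i - j = 1 ∨ j - i = 1)
    | Sum.inl i, Sum.inr p => p.1 = i
    | Sum.inr p, Sum.inl i => p.1 = i
    | Sum.inr _, Sum.inr _ => False
  symm := by
    constructor
    rintro (i | p) (j | q) h
    · exact ⟨h.1.symm, h.2.symm⟩
    · exact h
    · exact h
    · exact h
  loopless := by
    constructor
    rintro (i | p) h
    · exact h.1 rfl
    · exact h


/-- `w` strongly resolves `u` and `v`: `u` lies on a shortest `v`–`w` path or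
`v` lies on a shortest `u`–`w` path. -/
def StronglyResolves {V : Type*} (G : SimpleGraph V) (w u v : V) : Prop :=
  G.dist v w = G.dist v u + G.dist u w ∨ G.dist u w = G.dist u v + G.dist v w

/-- `N` is a strong resolving set of `G`. -/
def IsStrongResolving {V : Type*} (G : SimpleGraph V) (N : Set V) : Prop :=
  ∀ u v : V, u ≠ v → ∃ w ∈ N, StronglyResolves G w u v

/-!
A pendant vertex is never an interior vertex of a geodesic: a geodesic through it would enter
and leave it through its only neighbour. Hence two distinct pendant vertices are strongly
resolved only by themselves, so a strong resolving set of `JFG(n, m)` misses at most one of its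
`nm` pendant vertices, while the proposed set misses one at every cycle vertex.
-/

namespace SimpleGraph

variable {V : Type*} {G : SimpleGraph V}

def IsPendant (G : SimpleGraph V) (u : V) : Prop :=
  ∃ a, ∀ x, G.Adj u x ↔ x = a

lemma dist_eq_dist_add_one_of_forall_adj_iff (hG : G.Connected) {u a w : V}
    (ha : ∀ x, G.Adj u x ↔ x = a) (hw : w ≠ u) : G.dist u w = G.dist a w + 1 := by
  have hua : G.Adj u a := (ha a).2 rfl
  apply le_antisymm
  · calc G.dist u w ≤ G.dist u a + G.dist a w := hG.dist_triangle
      _ = G.dist a w + 1 := by rw [dist_eq_one_iff_adj.2 hua, add_comm]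
  · obtain ⟨p, hp⟩ := hG.exists_walk_length_eq_dist u w
    cases p with
    | nil => exact absurd rfl hw
    | cons hux q =>
      obtain rfl := (ha _).1 hux
      rw [← hp, Walk.length_cons]
      exact Nat.add_le_add_right (dist_le q) 1

lemma IsPendant.eq_or_eq_of_dist_eq_add (hu : G.IsPendant u) (hG : G.Connected) {v w : V}
    (h : G.dist v w = G.dist v u + G.dist u w) : u = v ∨ u = w := by
  obtain ⟨a, ha⟩ := hu
  by_contra! huvw
  have hvu : G.dist v u = G.dist v a + 1 := by
    rw [dist_comm, dist_eq_dist_add_one_of_forall_adj_iff hG ha huvw.1.symm, dist_comm]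
  have huw := dist_eq_dist_add_one_of_forall_adj_iff hG ha huvw.2.symm
  have hvw : G.dist v w ≤ G.dist v a + G.dist a w := hG.dist_triangle
  omega

lemma StronglyResolves.eq_or_eq_of_isPendant (hG : G.Connected) {w u v : V}
    (hu : G.IsPendant u) (hv : G.IsPendant v) (huv : u ≠ v) (h : StronglyResolves G w u v) :
    w = u ∨ w = v := by
  rcases h with h | h
  · exact .inl ((hu.eq_or_eq_of_dist_eq_add hG h).resolve_left huv).symm
  · exact .inr ((hv.eq_or_eq_of_dist_eq_add hG h).resolve_left huv.symm).symm

lemma IsStrongResolving.mem_or_mem_of_isPendant (hG : G.Connected) {N : Set V}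
    (hN : IsStrongResolving G N) {u v : V} (hu : G.IsPendant u) (hv : G.IsPendant v)
    (huv : u ≠ v) : u ∈ N ∨ v ∈ N := by
  obtain ⟨w, hwN, hw⟩ := hN u v huv
  rcases hw.eq_or_eq_of_isPendant hG hu hv huv with rfl | rfl
  exacts [.inl hwN, .inr hwN]

end SimpleGraph

lemma Set.card_sub_one_le_ncard_of_subsingleton_compl {α : Type*} [Finite α] {S : Set α}
    (hS : Sᶜ.Subsingleton) : Nat.card α - 1 ≤ S.ncard := by
  have := Set.ncard_add_ncard_compl S
  have := Set.ncard_le_one_iff_subsingleton.2 hS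
  omega

section Jellyfish

variable {n m : ℕ}

lemma jellyfish_isPendant (p : ZMod n × Fin m) : (jellyfish n m).IsPendant (Sum.inr p) :=
  ⟨Sum.inl p.1, by rintro (i | q) <;> simp [jellyfish, eq_comm]⟩

lemma jellyfish_reachable_inl_add_one (i : ZMod n) :
    (jellyfish n m).Reachable (Sum.inl i) (Sum.inl (i + 1)) := by
  by_cases h : i = i + 1
  · rw [← h]
  · exact Adj.reachable ⟨h, .inr (by ring)⟩

lemma jellyfish_reachable_inl (i j : ZMod n) :
    (jellyfish n m).Reachable (Sum.inl i) (Sum.inl j) := by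
  suffices h : ∀ k : ℤ, (jellyfish n m).Reachable (Sum.inl i) (Sum.inl (i + k)) by
    obtain ⟨k, hk⟩ := ZMod.intCast_surjective (j - i)
    simpa [hk] using h k
  intro k
  induction k using Int.induction_on with
  | zero => simp
  | succ k ih =>
    rw [Int.cast_add, Int.cast_one, ← add_assoc]
    exact ih.trans (jellyfish_reachable_inl_add_one _)
  | pred k ih =>
    have h := jellyfish_reachable_inl_add_one (m := m) (i + ((-k - 1 : ℤ) : ZMod n))
    rw [show i + ((-k - 1 : ℤ) : ZMod n) + 1 = i + ((-k : ℤ) : ZMod n) by push_cast; ring] at h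
    exact ih.trans h.symm

lemma jellyfish_connected : (jellyfish n m).Connected := by
  have hroot : ∀ u : JVert n m, (jellyfish n m).Reachable (Sum.inl 0) u := by
    rintro (i | p)
    · exact jellyfish_reachable_inl 0 i
    · exact (jellyfish_reachable_inl 0 p.1).trans (Adj.reachable rfl)
  exact ⟨fun u v => (hroot u).symm.trans (hroot v)⟩

lemma IsStrongResolving.jellyfish_inr_mem_or_mem {N : Set (JVert n m)}
    (hN : IsStrongResolving (jellyfish n m) N) {p q : ZMod n × Fin m} (hpq : p ≠ q) :
    Sum.inr p ∈ N ∨ Sum.inr q ∈ N :=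
  hN.mem_or_mem_of_isPendant jellyfish_connected (jellyfish_isPendant p)
    (jellyfish_isPendant q) (Sum.inr_injective.ne hpq)

end Jellyfish

theorem jellyfish_strong_lower_bound (n m : ℕ) (hn : 3 ≤ n) (hm : 2 ≤ m) :
    (∀ N : Set (JVert n m), IsStrongResolving (jellyfish n m) N → n * m - 1 ≤ N.ncard) ∧
    ¬ IsStrongResolving (jellyfish n m)
      {w : JVert n m | ∃ (i : ZMod n) (j : Fin m), (j : ℕ) ≠ m - 1 ∧ w = Sum.inr (i, j)} := by
  have : NeZero n := ⟨by omega⟩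
  have : Fact (1 < n) := ⟨by omega⟩
  constructor
  · intro N hN
    have hS : (Sum.inr ⁻¹' N : Set (ZMod n × Fin m))ᶜ.Subsingleton := fun p hp q hq => by
      by_contra hpq
      exact (hN.jellyfish_inr_mem_or_mem hpq).elim hp hq
    calc n * m - 1 = Nat.card (ZMod n × Fin m) - 1 := by simp
      _ ≤ (Sum.inr ⁻¹' N).ncard := Set.card_sub_one_le_ncard_of_subsingleton_compl hS
      _ ≤ N.ncard := Set.ncard_le_ncard_of_injOn _ (fun _ h => h) Sum.inr_injective.injOn
  · intro hN
    let last : Fin m := ⟨m - 1, by omega⟩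
    have hlast : ∀ i : ZMod n, Sum.inr (i, last) ∉
        {w : JVert n m | ∃ (i : ZMod n) (j : Fin m), (j : ℕ) ≠ m - 1 ∧ w = Sum.inr (i, j)} := by
      rintro i ⟨_, j, hj, h⟩
      exact hj (congrArg (fun p => (p.2 : ℕ)) (Sum.inr_injective h)).symm
    have h01 : ((0 : ZMod n), last) ≠ (1, last) := fun h => zero_ne_one (congrArg Prod.fst h)
    exact (hN.jellyfish_inr_mem_or_mem h01).elim (hlast 0) (hlast 1)
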